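/- For every real number x with 0 < x < 1/4, setting C(x) = (1 − √(1 − 4x))/(2x) (the generating function of the Catalan numbers evaluated at x), the sequence k ↦ F_k(x)/F_{k+1}(x) converges to C(x) as k → ∞. -/

import Mathlib

/-!
Write `x = a b` with `a + b = 1`, i.e. `a, b = (1 ± √(1 - 4x))/2` are the roots of `t² - t + x`.
The recursion then gives the Binet formula `F_k(x) (a - b) = a^(k+1) - b^(k+1)`, so for `|b| < a`
the ratio `F_k(x)/F_{k+1}(x)` tends to `1/a`, and `1/a = 2/(1 + √(1 - 4x)) = C(x)`.
-/

open Filter Topology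

/-- The two-variable Fibonacci polynomials: `F_0 = F_1 = 1`, `F_2 = 1 - z`,
`F_k = F_{k-1} - x F_{k-2}` for `k ≥ 3`. -/
noncomputable def fibPoly (x z : ℝ) : ℕ → ℝ
  | 0 => 1
  | 1 => 1
  | 2 => 1 - z
  | (k + 3) => fibPoly x z (k + 2) - x * fibPoly x z (k + 1)

theorem fibPoly_diag_add_two (x : ℝ) (k : ℕ) :
    fibPoly x x (k + 2) = fibPoly x x (k + 1) - x * fibPoly x x k := by
  cases k with
  | zero => simp [fibPoly]
  | succ n => rfl

theorem fibPoly_diag_mul_sub {a b : ℝ} (hab : a + b = 1) (k : ℕ) :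
    fibPoly (a * b) (a * b) k * (a - b) = a ^ (k + 1) - b ^ (k + 1) := by
  induction k using Nat.twoStepInduction with
  | zero => simp [fibPoly]
  | one =>
    simp only [fibPoly]
    linear_combination (b - a) * hab
  | more n ih₀ ih₁ =>
    rw [fibPoly_diag_add_two]
    linear_combination ih₁ - a * b * ih₀ - (a ^ (n + 2) - b ^ (n + 2)) * hab

theorem tendsto_pow_sub_pow_div_pow_succ_sub_pow_succ {a b : ℝ} (h : |b| < a) :
    Tendsto (fun k : ℕ => (a ^ k - b ^ k) / (a ^ (k + 1) - b ^ (k + 1))) atTop (𝓝 a⁻¹) := by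
  have ha : 0 < a := lt_of_le_of_lt (abs_nonneg b) h
  set q := b / a
  have hq : Tendsto (fun k : ℕ => q ^ k) atTop (𝓝 0) := by
    refine tendsto_pow_atTop_nhds_zero_of_abs_lt_one ?_
    rwa [abs_div, abs_of_pos ha, div_lt_one ha]
  have hratio : ∀ k : ℕ,
      (a ^ k - b ^ k) / (a ^ (k + 1) - b ^ (k + 1)) = (1 - q ^ k) / (a - b * q ^ k) := by
    intro k
    have hb : b ^ k = a ^ k * q ^ k := by rw [← mul_pow, mul_div_cancel₀ b ha.ne']
    rw [pow_succ, pow_succ, hb]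
    field_simp
  have hlim : Tendsto (fun k : ℕ => (1 - q ^ k) / (a - b * q ^ k)) atTop
      (𝓝 ((1 - 0) / (a - b * 0))) :=
    (tendsto_const_nhds.sub hq).div (tendsto_const_nhds.sub (hq.const_mul b))
      (by simpa using ha.ne')
  simpa [hratio] using hlim

theorem tendsto_fibPoly_diag_div_succ {a b : ℝ} (hab : a + b = 1) (h : |b| < a) :
    Tendsto (fun k : ℕ => fibPoly (a * b) (a * b) k / fibPoly (a * b) (a * b) (k + 1)) atTop
      (𝓝 a⁻¹) := by
  have hne : a - b ≠ 0 := sub_ne_zero.mpr (lt_of_le_of_lt (le_abs_self b) h).ne'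
  have hratio : ∀ k : ℕ, fibPoly (a * b) (a * b) k / fibPoly (a * b) (a * b) (k + 1) =
      (a ^ (k + 1) - b ^ (k + 1)) / (a ^ (k + 1 + 1) - b ^ (k + 1 + 1)) := fun k => by
    rw [← fibPoly_diag_mul_sub hab, ← fibPoly_diag_mul_sub hab, mul_div_mul_right _ _ hne]
  simpa only [hratio, Function.comp_def] using
    (tendsto_pow_sub_pow_div_pow_succ_sub_pow_succ h).comp (tendsto_add_atTop_nat 1)

/-- For `0 < x < 1/4`, with `C(x) = (1 − √(1 − 4x))/(2x)`,
the sequence `F_k(x)/F_{k+1}(x)` converges to `C(x)` as `k → ∞`. -/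
theorem stmt_8 (x : ℝ) (hx0 : 0 < x) (hx1 : x < 1 / 4) :
    Filter.Tendsto (fun k : ℕ => fibPoly x x k / fibPoly x x (k + 1))
      Filter.atTop (nhds ((1 - Real.sqrt (1 - 4 * x)) / (2 * x))) := by
  set s := Real.sqrt (1 - 4 * x)
  have hs : 0 < s := Real.sqrt_pos.mpr (by linarith)
  have hs2 : s ^ 2 = 1 - 4 * x := Real.sq_sqrt (by linarith)
  have hprod : (1 + s) / 2 * ((1 - s) / 2) = x := by linear_combination -hs2 / 4
  have hdom : |(1 - s) / 2| < (1 + s) / 2 := abs_lt.mpr ⟨by linarith, by linarith⟩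
  have hinv : ((1 + s) / 2)⁻¹ = (1 - s) / (2 * x) := by
    field_simp
    linear_combination hs2
  have key := tendsto_fibPoly_diag_div_succ (by ring) hdom
  rwa [hprod, hinv] at key
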